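/- Let θ_1,...,θ_N be fixed points with f(θ_n) = (p(θ_n)/q(θ_n)) b(θ_n), and conditionally independent estimates L̂_n that are means of M i.i.d. Bernoulli(b(θ_n)). Suppose p(θ)/q(θ) ≤ C for all θ and |N^{-1}∑_n f(θ_n) - Z| ≤ D N^{τ-1} for some constants C, D > 0 and 0 < τ < 1/2. Then M · E[(Ẑ_N - Z)^2] ≤ D^2 M N^{2τ-2} + C^2/(4N), and in particular M · E[(Ẑ_N - Z)^2] = O(N^{-1}) with constant independent of M for fixed M. -/

import Mathlib

/-!
Split the mean squared error into variance plus squared bias. The bias of `Ẑ_N` is the QMC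
error `N⁻¹ ∑ f(θ_n) - Z`, bounded by hypothesis. By independence the variance of `Ẑ_N` is
`N⁻² ∑ (p/q)(θ_n)² Var[L̂_n]`, and each summand is at most `C² / (4M)` because
`b (1 - b) ≤ 1/4`.
-/

open MeasureTheory ProbabilityTheory

namespace ProbabilityTheory

variable {Ω : Type*} [MeasurableSpace Ω] {μ : Measure Ω}

theorem integral_sub_const_sq [IsProbabilityMeasure μ] {X : Ω → ℝ} (hX : MemLp X 2 μ) (c : ℝ) :
    ∫ ω, (X ω - c) ^ 2 ∂μ = Var[X; μ] + (μ[X] - c) ^ 2 := by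
  have h := variance_eq_sub (X := fun ω ↦ X ω - c) (hX.sub (memLp_const c))
  rw [variance_sub_const hX.aestronglyMeasurable,
    integral_sub (hX.integrable one_le_two) (integrable_const c)] at h
  simp only [integral_const, probReal_univ, smul_eq_mul, one_mul] at h
  rw [h]
  simp only [Pi.pow_apply]
  ring

theorem iIndepFun.variance_sum_mul {ι : Type*} {X : ι → Ω → ℝ} (hX : ∀ i, MemLp (X i) 2 μ)
    (hind : iIndepFun X μ) (w : ι → ℝ) (s : Finset ι) :
    Var[fun ω ↦ ∑ i ∈ s, w i * X i ω; μ] = ∑ i ∈ s, w i ^ 2 * Var[X i; μ] := by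
  have hpair : Set.Pairwise ↑s fun i j ↦
      IndepFun (fun ω ↦ w i * X i ω) (fun ω ↦ w j * X j ω) μ := fun i _ j _ hij ↦
    (hind.indepFun hij).comp (measurable_const_mul (w i)) (measurable_const_mul (w j))
  have hsum := IndepFun.variance_sum (fun i _ ↦ (hX i).const_mul (w i)) hpair
  simp only [variance_const_mul] at hsum
  rw [← hsum]
  congr 1
  ext ω
  simp

theorem iIndepFun.variance_sum_mul_div_card_le {ι : Type*} [Fintype ι] [Nonempty ι]
    {X : ι → Ω → ℝ} (hX : ∀ i, MemLp (X i) 2 μ) (hind : iIndepFun X μ) {w : ι → ℝ} {C v : ℝ}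
    (hw : ∀ i, |w i| ≤ C) (hv : ∀ i, Var[X i; μ] ≤ v) :
    Var[fun ω ↦ (∑ i, w i * X i ω) / Fintype.card ι; μ] ≤ C ^ 2 * v / Fintype.card ι := by
  have hcard : (0 : ℝ) < Fintype.card ι := by exact_mod_cast Fintype.card_pos
  simp_rw [div_eq_mul_inv, variance_mul_const, hind.variance_sum_mul hX w]
  calc (∑ i, w i ^ 2 * Var[X i; μ]) * (Fintype.card ι : ℝ)⁻¹ ^ 2
      ≤ (∑ _i : ι, C ^ 2 * v) * (Fintype.card ι : ℝ)⁻¹ ^ 2 := by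
        refine mul_le_mul_of_nonneg_right (Finset.sum_le_sum fun i _ ↦ ?_) (by positivity)
        exact mul_le_mul (sq_le_sq' (abs_le.mp (hw i)).1 (abs_le.mp (hw i)).2) (hv i)
          (variance_nonneg _ _) (sq_nonneg C)
    _ = C ^ 2 * v * (Fintype.card ι : ℝ)⁻¹ := by
        rw [Finset.sum_const, Finset.card_univ, nsmul_eq_mul]
        field_simp

end ProbabilityTheory

theorem mul_one_sub_le_one_quarter (b : ℝ) : b * (1 - b) ≤ 1 / 4 := by
  nlinarith [sq_nonneg (2 * b - 1)]

theorem Real.rpow_sq {x : ℝ} (hx : 0 ≤ x) (y : ℝ) : (x ^ y) ^ 2 = x ^ (2 * y) := by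
  rw [← Real.rpow_natCast, ← Real.rpow_mul hx, mul_comm]
  norm_num

theorem stmt_8_general {Ω T : Type*} [MeasurableSpace Ω] (μ : Measure Ω) [IsProbabilityMeasure μ]
    (N M : ℕ) (hN : 1 ≤ N) (hM : 1 ≤ M)
    (θ : Fin N → T) (p q b : T → ℝ)
    (C D : ℝ)
    (hw : ∀ t, 0 ≤ p t / q t ∧ p t / q t ≤ C)
    (τ : ℝ)
    (f : T → ℝ) (hf : ∀ t, f t = p t / q t * b t)
    (Z : ℝ)
    (hbias : |(∑ n, f (θ n)) / N - Z| ≤ D * (N : ℝ) ^ (τ - 1 : ℝ))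
    (L : Fin N → Ω → ℝ)
    (hL2 : ∀ n, MemLp (L n) 2 μ)
    (hindep : iIndepFun L μ)
    (hmean : ∀ n, (∫ ω, L n ω ∂μ) = b (θ n))
    (hvar : ∀ n, variance (L n) μ = b (θ n) * (1 - b (θ n)) / M)
    (Zhat : Ω → ℝ) (hZhat : ∀ ω, Zhat ω = (∑ n, p (θ n) / q (θ n) * L n ω) / N) :
    (M : ℝ) * ∫ ω, (Zhat ω - Z) ^ 2 ∂μ
      ≤ D ^ 2 * M * (N : ℝ) ^ (2 * τ - 2 : ℝ) + C ^ 2 / (4 * N) := by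
  have hN0 : (0 : ℝ) < N := by exact_mod_cast hN
  have hM0 : (0 : ℝ) < M := by exact_mod_cast hM
  have : Nonempty (Fin N) := ⟨⟨0, hN⟩⟩
  set w : Fin N → ℝ := fun n ↦ p (θ n) / q (θ n)
  have hZhat' : Zhat = fun ω ↦ (∑ n, w n * L n ω) / N := funext hZhat
  have hZhatL2 : MemLp Zhat 2 μ := by
    simp_rw [hZhat', div_eq_mul_inv]
    exact (memLp_finsetSum Finset.univ fun n _ ↦ (hL2 n).const_mul (w n)).mul_const _
  have hmeanZ : μ[Zhat] = (∑ n, f (θ n)) / N := by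
    simp only [hZhat', integral_div, integral_const_mul, hmean, hf, w,
      integral_finsetSum _ fun n _ ↦ ((hL2 n).integrable one_le_two).const_mul _]
  have hvarZ : M * Var[Zhat; μ] ≤ C ^ 2 / (4 * N) := by
    have h := hindep.variance_sum_mul_div_card_le hL2 (w := w) (v := 1 / 4 / M)
      (fun n ↦ abs_le.mpr ⟨by linarith [hw (θ n)], (hw (θ n)).2⟩)
      (fun n ↦ by rw [hvar n]; gcongr; exact mul_one_sub_le_one_quarter _)
    rw [Fintype.card_fin] at h
    calc M * Var[Zhat; μ] ≤ M * (C ^ 2 * (1 / 4 / M) / N) := by rw [hZhat']; gcongr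
      _ = C ^ 2 / (4 * N) := by field_simp
  have hbiasZ : M * (μ[Zhat] - Z) ^ 2 ≤ D ^ 2 * M * (N : ℝ) ^ (2 * τ - 2 : ℝ) := by
    calc M * (μ[Zhat] - Z) ^ 2 ≤ M * (D * (N : ℝ) ^ (τ - 1 : ℝ)) ^ 2 := by
          rw [← sq_abs, hmeanZ]; gcongr
      _ = D ^ 2 * M * (N : ℝ) ^ (2 * τ - 2 : ℝ) := by
          rw [mul_pow, Real.rpow_sq hN0.le]; ring_nf
  rw [integral_sub_const_sq hZhatL2 Z, mul_add, add_comm]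
  exact add_le_add hbiasZ hvarZ

/-- QMC points `θ_1,...,θ_N` are fixed, `f = (p/q)·b`, the `L̂_n` are
independent with mean `b(θ_n)` and variance `b(θ_n)(1-b(θ_n))/M`; if `p/q ≤ C` and the
bias satisfies `|N⁻¹∑ f(θ_n) - Z| ≤ D N^{τ-1}`, then
`M · E[(Ẑ_N - Z)²] ≤ D² M N^{2τ-2} + C²/(4N)`. -/
theorem stmt_8 {Ω T : Type*} [MeasurableSpace Ω] (μ : Measure Ω) [IsProbabilityMeasure μ]
    (N M : ℕ) (hN : 1 ≤ N) (hM : 1 ≤ M)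
    (θ : Fin N → T) (p q b : T → ℝ)
    (hb : ∀ t, b t ∈ Set.Icc (0 : ℝ) 1)
    (C D : ℝ) (hC : 0 < C) (hD : 0 < D)
    (hw : ∀ t, 0 ≤ p t / q t ∧ p t / q t ≤ C)
    (τ : ℝ) (hτ0 : 0 < τ) (hτ1 : τ < 1 / 2)
    (f : T → ℝ) (hf : ∀ t, f t = p t / q t * b t)
    (Z : ℝ)
    (hbias : |(∑ n, f (θ n)) / N - Z| ≤ D * (N : ℝ) ^ (τ - 1 : ℝ))
    (L : Fin N → Ω → ℝ)
    (hL2 : ∀ n, MemLp (L n) 2 μ)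
    (hindep : iIndepFun L μ)
    (hmean : ∀ n, (∫ ω, L n ω ∂μ) = b (θ n))
    (hvar : ∀ n, variance (L n) μ = b (θ n) * (1 - b (θ n)) / M)
    (Zhat : Ω → ℝ) (hZhat : ∀ ω, Zhat ω = (∑ n, p (θ n) / q (θ n) * L n ω) / N) :
    (M : ℝ) * ∫ ω, (Zhat ω - Z) ^ 2 ∂μ
      ≤ D ^ 2 * M * (N : ℝ) ^ (2 * τ - 2 : ℝ) + C ^ 2 / (4 * N) :=
  stmt_8_general μ N M hN hM θ p q b C D hw τ f hf Z hbias L hL2 hindep hmean hvar Zhat hZhat
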